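/- arXiv:2110.15572 — 2 statements merged into one kernel-verified Lean document; each statement's English description precedes it below -/
import Mathlib

section
/- Committal rate of softmax PG is at most 1: fix a ∈ [K], θ̃_1 ∈ ℝ^K and a constant learning rate η ∈ (0,1], and define the fixed-sampling softmax PG sequence θ̃_{t+1} := θ̃_t + η·g_a(θ̃_t). Then there exists T ≥ 1 such that for all t ≥ T, t·(1 − π_{θ̃_t}(a)) ≥ 1/(6·r(a)); in particular 1 − π_{θ̃_t}(a) cannot decrease faster than order 1/t. -/
open Finset Real Filter

/-- Softmax policy: `π_θ(a) = exp(θ(a)) / Σ_{a'} exp(θ(a'))`. -/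
noncomputable def softmax {K : ℕ} (θ : Fin K → ℝ) (a : Fin K) : ℝ :=
  Real.exp (θ a) / ∑ a', Real.exp (θ a')

/-- On-policy IS stochastic softmax policy gradient for sampled action `a`:
`g_a(θ)(i) = 1{i = a}·r(a) − π_θ(i)·r(a)`. -/
noncomputable def stochPG {K : ℕ} (r : Fin K → ℝ) (a : Fin K) (θ : Fin K → ℝ)
    (i : Fin K) : ℝ :=
  (if i = a then r a else 0) - softmax θ i * r a

/-!
Write `S = Σ_{i ≠ a} exp(θ i - θ a)` for the odds against `a`, so that `1 - π_θ(a) = S / (1 + S)`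
and `1 / (1 - π_θ(a)) = 1 + 1 / S`. One step with `c = η r(a)` lowers every logit gap
`θ i - θ a` by `c (1 - π(a) + π(i)) ≤ 2c (1 - π(a))`, hence `S' ≥ exp(-2c S/(1+S)) S`, and an
elementary estimate turns this into `1 / S' ≤ 1 / S + 2e c`. So `1 / (1 - π_{θ_t}(a))` grows at
most linearly with slope `2e η r(a) < 6 r(a)`, which gives the bound for large `t`.
-/

section Softmax

variable {K : ℕ}

lemma softmax_nonneg (θ : Fin K → ℝ) (i : Fin K) : 0 ≤ softmax θ i :=
  div_nonneg (exp_pos _).le (sum_nonneg fun _ _ => (exp_pos _).le)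

lemma sum_softmax [Nonempty (Fin K)] (θ : Fin K → ℝ) : ∑ i, softmax θ i = 1 := by
  simp only [softmax, ← sum_div]
  exact div_self (sum_pos (fun _ _ => exp_pos _) univ_nonempty).ne'

lemma softmax_add_softmax_le_one (θ : Fin K → ℝ) {i a : Fin K} (h : i ≠ a) :
    softmax θ i + softmax θ a ≤ 1 := by
  have : Nonempty (Fin K) := ⟨a⟩
  rw [← sum_pair h, ← sum_softmax θ]
  exact sum_le_univ_sum_of_nonneg (softmax_nonneg θ)

/-- The odds against action `a`, `(1 - π_θ(a)) / π_θ(a)`. -/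
noncomputable def oddsAgainst (θ : Fin K → ℝ) (a : Fin K) : ℝ :=
  ∑ i ∈ univ.erase a, exp (θ i - θ a)

lemma oddsAgainst_pos [Nontrivial (Fin K)] (θ : Fin K → ℝ) (a : Fin K) :
    0 < oddsAgainst θ a := by
  obtain ⟨b, hb⟩ := exists_ne a
  exact sum_pos (fun _ _ => exp_pos _) ⟨b, mem_erase.2 ⟨hb, mem_univ b⟩⟩

lemma sum_exp_eq_mul_one_add_oddsAgainst (θ : Fin K → ℝ) (a : Fin K) :
    ∑ i, exp (θ i) = exp (θ a) * (1 + oddsAgainst θ a) := by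
  rw [← add_sum_erase _ _ (mem_univ a), oddsAgainst, mul_add, mul_one, mul_sum]
  congr 1
  refine sum_congr rfl fun i _ => ?_
  rw [← exp_add, add_sub_cancel]

lemma one_sub_softmax_eq (θ : Fin K → ℝ) (a : Fin K) :
    1 - softmax θ a = oddsAgainst θ a / (1 + oddsAgainst θ a) := by
  have hS : 0 < 1 + oddsAgainst θ a :=
    add_pos_of_pos_of_nonneg one_pos (sum_nonneg fun _ _ => (exp_pos _).le)
  rw [softmax, sum_exp_eq_mul_one_add_oddsAgainst]
  field_simp
  ring

lemma one_sub_softmax_pos [Nontrivial (Fin K)] (θ : Fin K → ℝ) (a : Fin K) :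
    0 < 1 - softmax θ a := by
  have hS := oddsAgainst_pos θ a
  rw [one_sub_softmax_eq]
  positivity

lemma one_div_one_sub_softmax [Nontrivial (Fin K)] (θ : Fin K → ℝ) (a : Fin K) :
    1 / (1 - softmax θ a) = 1 + 1 / oddsAgainst θ a := by
  have hS := oddsAgainst_pos θ a
  rw [one_sub_softmax_eq]
  field_simp
  ring

end Softmax

lemma one_div_le_one_div_add_of_exp_mul_le {S S' c : ℝ} (hS : 0 < S) (hc0 : 0 ≤ c) (hc1 : c ≤ 1)
    (h : exp (-(2 * c * (S / (1 + S)))) * S ≤ S') :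
    1 / S' ≤ 1 / S + 2 * exp 1 * c := by
  set x := 2 * c * (S / (1 + S)) with hx
  have hS1 : 0 < 1 + S := by linarith
  have hu : S / (1 + S) < 1 := (div_lt_one hS1).2 (by linarith)
  have hexp_u : exp (S / (1 + S)) ≤ 1 + S := by
    convert exp_bound_div_one_sub_of_interval (by positivity) hu using 1
    field_simp
    ring
  have hexp_x : exp x ≤ exp 1 * (1 + S) := by
    calc exp x ≤ exp (1 + S / (1 + S)) := exp_le_exp.2 (by
          nlinarith [mul_le_mul_of_nonneg_right hc1 (div_nonneg hS.le hS1.le)])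
      _ ≤ exp 1 * (1 + S) := by rw [exp_add]; gcongr
  -- `1 - x ≤ exp (-x)`, multiplied by `exp x`
  have hexp_le : exp x ≤ 1 + x * exp x := by
    have := mul_le_mul_of_nonneg_left (add_one_le_exp (-x)) (exp_pos x).le
    rw [← exp_add, add_neg_cancel, exp_zero] at this
    linarith
  calc 1 / S' ≤ 1 / (exp (-x) * S) := one_div_le_one_div_of_le (by positivity) h
    _ = exp x / S := by rw [exp_neg]; field_simp
    _ ≤ (1 + x * exp x) / S := by gcongr
    _ = 1 / S + 2 * c * (exp x / (1 + S)) := by rw [hx]; field_simp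
    _ ≤ 1 / S + 2 * c * exp 1 := by gcongr; exact (div_le_iff₀ hS1).2 hexp_x
    _ = 1 / S + 2 * exp 1 * c := by ring

section PolicyGradient

variable {K : ℕ}

lemma exp_mul_oddsAgainst_le_oddsAgainst_step (r : Fin K → ℝ) (a : Fin K) {η : ℝ}
    (hc : 0 ≤ η * r a) (θ : Fin K → ℝ) :
    exp (-(2 * (η * r a) * (1 - softmax θ a))) * oddsAgainst θ a ≤
      oddsAgainst (fun i => θ i + η * stochPG r a θ i) a := by
  rw [oddsAgainst, oddsAgainst, mul_sum]
  refine sum_le_sum fun i hi => ?_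
  have hia := ne_of_mem_erase hi
  rw [← exp_add, exp_le_exp]
  simp only [stochPG, if_neg hia, if_true]
  nlinarith [mul_nonneg hc (sub_nonneg.2 (softmax_add_softmax_le_one θ hia))]

lemma one_div_one_sub_softmax_step_le [Nontrivial (Fin K)] (r : Fin K → ℝ) (a : Fin K) {η : ℝ}
    (hc0 : 0 ≤ η * r a) (hc1 : η * r a ≤ 1) (θ : Fin K → ℝ) :
    1 / (1 - softmax (fun i => θ i + η * stochPG r a θ i) a) ≤
      1 / (1 - softmax θ a) + 2 * exp 1 * (η * r a) := by
  have hstep := exp_mul_oddsAgainst_le_oddsAgainst_step r a hc0 θ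
  rw [one_sub_softmax_eq] at hstep
  have := one_div_le_one_div_add_of_exp_mul_le (oddsAgainst_pos θ a) hc0 hc1 hstep
  rw [one_div_one_sub_softmax, one_div_one_sub_softmax]
  linarith

end PolicyGradient

lemma exists_forall_ge_one_div_le_mul_of_one_div_le_add {u : ℕ → ℝ} {B C : ℝ}
    (hu : ∀ t, 0 < u t) (hC : 0 < C) (hBC : B < C) (h : ∀ t, 1 / u (t + 1) ≤ 1 / u t + B) :
    ∃ T : ℕ, ∀ t ≥ T, 1 / C ≤ ((t : ℝ) + 1) * u t := by
  have hlin : ∀ t : ℕ, 1 / u t ≤ 1 / u 0 + B * t := by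
    intro t
    induction t with
    | zero => simp
    | succ t ih => push_cast; linarith [h t]
  refine ⟨⌈1 / u 0 / (C - B)⌉₊, fun t ht => ?_⟩
  have hT : 1 / u 0 ≤ (C - B) * t :=
    (div_le_iff₀' (sub_pos.2 hBC)).1 (Nat.ceil_le.1 ht)
  have hinv : 1 / u t ≤ C * (t + 1) := by linarith [hlin t]
  rw [div_le_iff₀ (hu t)] at hinv
  rw [div_le_iff₀ hC]
  linarith

-- `θ 0` plays the role of the paper's `θ̃_1`, which turns the paper's factor `t` into `t + 1`.
/-- Committal rate of softmax PG is at most 1: for the fixed-sampling sequence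
`θ_{t+1} = θ_t + η·g_a(θ_t)` with a constant learning rate `η ∈ (0,1]`, there is
`T` such that `t·(1 − π_{θ_t}(a)) ≥ 1/(6·r(a))` for all `t ≥ T`; so `1 − π_{θ_t}(a)`
cannot decrease faster than order `1/t`.  (Here `θ 0` is the paper's `θ_1`, so the
factor `t` becomes `t + 1`.) -/
theorem committal_rate_softmax_pg_le_one
    {K : ℕ} (hK : 2 ≤ K) (r : Fin K → ℝ)
    (hr : ∀ a, 0 < r a ∧ r a ≤ 1)
    (a : Fin K) (η : ℝ) (hη : 0 < η) (hη1 : η ≤ 1)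
    (θ : ℕ → Fin K → ℝ)
    (hupd : ∀ t, θ (t + 1) = fun i => θ t i + η * stochPG r a (θ t) i) :
    ∃ T : ℕ, ∀ t ≥ T, 1 / (6 * r a) ≤ ((t : ℝ) + 1) * (1 - softmax (θ t) a) := by
  have : Nontrivial (Fin K) := Fin.nontrivial_iff_two_le.2 hK
  obtain ⟨hra, hra1⟩ := hr a
  have hc0 : 0 ≤ η * r a := by positivity
  have hc1 : η * r a ≤ 1 := mul_le_one₀ hη1 hra.le hra1
  have hslope : 2 * exp 1 * (η * r a) < 6 * r a := by
    nlinarith [exp_one_lt_d9, exp_pos 1, mul_le_of_le_one_left hra.le hη1]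
  refine exists_forall_ge_one_div_le_mul_of_one_div_le_add (fun t => one_sub_softmax_pos (θ t) a)
    (by positivity) hslope fun t => ?_
  rw [hupd t]
  exact one_div_one_sub_softmax_step_le r a hc0 hc1 (θ t)
end

section
/- Monotone improvement of NPG with an oracle baseline: fix η > 0 and a baseline b with r(a*) − Δ < b < r(a*). For any parameter θ ∈ ℝ^K and any sampled action â ∈ [K], the oracle-baseline NPG update produces θ' ∈ ℝ^K with θ'(â) := θ(â) + (η/π_θ(â))·(r(â) − b) and θ'(a') := θ(a') for all a' ≠ â. Then π_{θ'}(a*) > π_θ(a*) for every choice of sampled action â (whether â = a* or â ≠ a*). Consequently, along any sequence of sampled actions, π_{θ_t}(a*) is strictly increasing in t. -/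
/-!
Raising the logit of the sampled action `â` raises `π(â)` and lowers every other probability;
lowering it does the opposite. The oracle-baseline step moves `θ(â)` in the direction of
`r(â) - b`, which is positive exactly when `â = a*`, because the baseline separates
`r(a*)` from all suboptimal rewards. Either way `π(a*)` goes up.
-/

open Finset Real Filter

noncomputable def npgUpdate {K : ℕ} (r : Fin K → ℝ) (η b : ℝ) (θ : Fin K → ℝ) (â : Fin K) :
    Fin K → ℝ :=
  Function.update θ â (θ â + η / softmax θ â * (r â - b))

lemma sum_exp_update {ι : Type*} [Fintype ι] [DecidableEq ι] (θ : ι → ℝ) (i : ι) (v : ℝ) :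
    ∑ j, exp (Function.update θ i v j) = exp v + ∑ j ∈ univ.erase i, exp (θ j) := by
  rw [← add_sum_erase _ _ (mem_univ i), Function.update_self]
  congr 1
  exact sum_congr rfl fun j hj => by rw [Function.update_of_ne (ne_of_mem_erase hj)]

lemma softmax_pos {K : ℕ} (θ : Fin K → ℝ) (a : Fin K) : 0 < softmax θ a :=
  div_pos (exp_pos _) (sum_pos (fun _ _ => exp_pos _) ⟨a, mem_univ a⟩)

lemma softmax_lt_softmax_update_of_ne {K : ℕ} (θ : Fin K → ℝ) {a â : Fin K} (ha : a ≠ â)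
    {v : ℝ} (hv : v < θ â) : softmax θ a < softmax (Function.update θ â v) a := by
  have hsum : ∑ j, exp (θ j) = exp (θ â) + ∑ j ∈ univ.erase â, exp (θ j) :=
    (add_sum_erase _ _ (mem_univ â)).symm
  have hrest : 0 ≤ ∑ j ∈ univ.erase â, exp (θ j) := sum_nonneg fun _ _ => (exp_pos _).le
  have hexp : exp v < exp (θ â) := exp_lt_exp.mpr hv
  unfold softmax
  rw [sum_exp_update, hsum, Function.update_of_ne ha]
  exact div_lt_div_of_pos_left (exp_pos _) (by positivity) (by linarith)

lemma softmax_lt_softmax_update_self {K : ℕ} (hK : 1 < K) (θ : Fin K → ℝ) (â : Fin K)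
    {v : ℝ} (hv : θ â < v) : softmax θ â < softmax (Function.update θ â v) â := by
  have : Nontrivial (Fin K) := Fin.nontrivial_iff_two_le.mpr hK
  obtain ⟨a, ha⟩ := exists_ne â
  set R := ∑ j ∈ univ.erase â, exp (θ j)
  have hR : 0 < R := sum_pos (fun _ _ => exp_pos _) ⟨a, mem_erase.mpr ⟨ha, mem_univ a⟩⟩
  have hsum : ∑ j, exp (θ j) = exp (θ â) + R := (add_sum_erase _ _ (mem_univ â)).symm
  have hexp : exp (θ â) < exp v := exp_lt_exp.mpr hv
  have hx := exp_pos (θ â)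
  unfold softmax
  rw [sum_exp_update, hsum, Function.update_self, div_lt_div_iff₀ (by positivity) (by positivity)]
  nlinarith

lemma softmax_lt_softmax_npgUpdate {K : ℕ} (hK : 1 < K) {r : Fin K → ℝ} {astar : Fin K}
    {η b : ℝ} (hη : 0 < η) (hsub : ∀ a, a ≠ astar → r a < b) (hb : b < r astar)
    (θ : Fin K → ℝ) (â : Fin K) : softmax θ astar < softmax (npgUpdate r η b θ â) astar := by
  have hstep : 0 < η / softmax θ â := div_pos hη (softmax_pos θ â)
  unfold npgUpdate
  by_cases h : â = astar
  · subst h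
    exact softmax_lt_softmax_update_self hK θ â
      (lt_add_of_pos_right _ (mul_pos hstep (by linarith)))
  · exact softmax_lt_softmax_update_of_ne θ (Ne.symm h)
      (add_lt_of_neg_right _ (mul_neg_of_pos_of_neg hstep (by linarith [hsub â h])))

theorem npg_oracle_baseline_monotone_general
    {K : ℕ} (hK : 2 ≤ K) (r : Fin K → ℝ)
    (astar : Fin K)
    (Δ : ℝ) (hΔ : Δ = r astar - sSup (r '' {a | a ≠ astar}))
    (η b : ℝ) (hη : 0 < η) (hb1 : r astar - Δ < b) (hb2 : b < r astar) :
    (∀ (θ : Fin K → ℝ) (ahat : Fin K),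
      softmax θ astar <
        softmax
          (fun a' => if a' = ahat then θ ahat + η / softmax θ ahat * (r ahat - b) else θ a')
          astar) ∧
    ∀ (act : ℕ → Fin K) (θ : ℕ → Fin K → ℝ),
      (∀ t, θ (t + 1) = fun a' =>
        if a' = act t then θ t (act t) + η / softmax (θ t) (act t) * (r (act t) - b)
        else θ t a') →
      ∀ t, softmax (θ t) astar < softmax (θ (t + 1)) astar := by
  have hsub : ∀ a, a ≠ astar → r a < b := fun a ha => by
    have := le_csSup ((Set.toFinite {a | a ≠ astar}).image r).bddAbove ⟨a, ha, rfl⟩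
    linarith
  have hupdate : ∀ θ ahat, (fun a' => if a' = ahat then
      θ ahat + η / softmax θ ahat * (r ahat - b) else θ a') = npgUpdate r η b θ ahat :=
    fun θ ahat => funext fun a' => (Function.update_apply ..).symm
  have hmono := softmax_lt_softmax_npgUpdate hK hη hsub hb2
  refine ⟨fun θ ahat => hupdate θ ahat ▸ hmono θ ahat, fun act θ hrec t => ?_⟩
  rw [hrec t, hupdate]
  exact hmono (θ t) (act t)

/-- Monotone improvement of NPG with an oracle baseline: with `η > 0` and a baseline
`b ∈ (r(a*) − Δ, r(a*))`, the oracle-baseline NPG update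
`θ'(â) = θ(â) + (η/π_θ(â))·(r(â) − b)`, `θ'(a') = θ(a')` for `a' ≠ â`
strictly increases the optimal action's probability for every sampled action `â`;
consequently along any sequence of sampled actions, `π_{θ_t}(a*)` is strictly
increasing in `t`. -/
theorem npg_oracle_baseline_monotone
    {K : ℕ} (hK : 2 ≤ K) (r : Fin K → ℝ)
    (hr : ∀ a, 0 < r a ∧ r a ≤ 1)
    (astar : Fin K) (hstar : ∀ a, a ≠ astar → r a < r astar)
    (Δ : ℝ) (hΔ : Δ = r astar - sSup (r '' {a | a ≠ astar}))
    (η b : ℝ) (hη : 0 < η) (hb1 : r astar - Δ < b) (hb2 : b < r astar) :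
    (∀ (θ : Fin K → ℝ) (ahat : Fin K),
      softmax θ astar <
        softmax
          (fun a' => if a' = ahat then θ ahat + η / softmax θ ahat * (r ahat - b) else θ a')
          astar) ∧
    ∀ (act : ℕ → Fin K) (θ : ℕ → Fin K → ℝ),
      (∀ t, θ (t + 1) = fun a' =>
        if a' = act t then θ t (act t) + η / softmax (θ t) (act t) * (r (act t) - b)
        else θ t a') →
      ∀ t, softmax (θ t) astar < softmax (θ (t + 1)) astar :=
  npg_oracle_baseline_monotone_general hK r astar Δ hΔ η b hη hb1 hb2
end
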